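/- arXiv:2009.01318 — 6 statements merged into one kernel-verified Lean document; each statement's English description precedes it below -/
import Mathlib

section
/- Let X be a regular topological space, S a directed set, (X_s)_{s∈S} a net of subsets of X, and A ⊆ X a subset. If (X_s) converges from above to A, then L(X_s)_{s∈S} ⊆ closure(A). -/
/-- in a regular space, if a net of subsets converges from above to `A`,
then the limit set is contained in `closure A`. -/
theorem stmt_11 {X S : Type*} [TopologicalSpace X] [RegularSpace X] [Preorder S] [Nonempty S]
    (hS : ∀ a b : S, ∃ c, a ≤ c ∧ b ≤ c) (F : S → Set X) (A : Set X)
    (h : ∀ U ∈ nhdsSet A, ∃ s : S, ∀ t, s ≤ t → F t ⊆ U) :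
    (⋂ s : S, closure (⋃ t : S, ⋃ _ : s ≤ t, F t)) ⊆ closure A := by
  intro x hx
  by_contra hxA
  have hU : (closure A)ᶜ ∈ nhds x := (isClosed_closure.isOpen_compl).mem_nhds hxA
  obtain ⟨C, hCn, hCcl, hCsub⟩ := exists_mem_nhds_isClosed_subset hU
  have hAC : Cᶜ ∈ nhdsSet A := by
    refine hCcl.isOpen_compl.mem_nhdsSet.mpr ?_
    intro a ha
    exact fun hc => (hCsub hc) (subset_closure ha)
  obtain ⟨s, hs⟩ := h _ hAC
  have hxs : x ∈ closure (⋃ t : S, ⋃ _ : s ≤ t, F t) := Set.mem_iInter.mp hx s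
  have hsub : (⋃ t : S, ⋃ _ : s ≤ t, F t) ⊆ Cᶜ := by
    simp only [Set.iUnion_subset_iff]
    exact fun t ht => hs t ht
  have : x ∈ closure Cᶜ := closure_mono hsub hxs
  have hxint : x ∈ interior C := mem_interior_iff_mem_nhds.mpr hCn
  rw [closure_compl] at this
  exact this hxint
end

section
/- Let X be a topological space, S a directed set, and (X_s)_{s∈S} a net of subsets of X that is weakly asymptotically compact. Then (X_s) converges from above to its limit set L(X_s)_{s∈S}, i.e., for every neighborhood U of L(X_s), there exists s ∈ S such that ⋃_{t≥s} X_t ⊆ U. -/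
universe u

/-- a weakly asymptotically compact net of subsets converges from above
to its limit set. -/
theorem stmt_12 {X S : Type u} [TopologicalSpace X] [Preorder S] [Nonempty S]
    (hS : ∀ a b : S, ∃ c, a ≤ c ∧ b ≤ c) (F : S → Set X)
    (hwac : ∀ (I : Type u) (_ : Preorder I), Nonempty I →
      (∀ a b : I, ∃ c, a ≤ c ∧ b ≤ c) →
      ∀ h : I → S, Monotone h → (∀ s : S, ∃ i : I, s ≤ h i) →
      ∀ yi : I → X, (∀ i, yi i ∈ ⋃ t : S, ⋃ _ : h i ≤ t, F t) →
      ∃ (J : Type u) (_ : Preorder J) (g : J → I) (p : X),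
        Nonempty J ∧ (∀ a b : J, ∃ c, a ≤ c ∧ b ≤ c) ∧
        (∀ i : I, ∃ j₀ : J, ∀ j, j₀ ≤ j → i ≤ g j) ∧
        (∀ U ∈ nhds p, ∃ j₀ : J, ∀ j, j₀ ≤ j → yi (g j) ∈ U)) :
    ∀ U ∈ nhdsSet (⋂ s : S, closure (⋃ t : S, ⋃ _ : s ≤ t, F t)),
      ∃ s : S, ∀ t, s ≤ t → F t ⊆ U := by
  intro U hU
  by_contra hcon
  push_neg at hcon
  have hy : ∀ s : S, ∃ y : X, y ∈ (⋃ t : S, ⋃ _ : s ≤ t, F t) ∧ y ∉ U := by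
    intro s
    obtain ⟨t, hst, hFt⟩ := hcon s
    obtain ⟨z, hzF, hzU⟩ := Set.not_subset.mp hFt
    exact ⟨z, Set.mem_iUnion.mpr ⟨t, Set.mem_iUnion.mpr ⟨hst, hzF⟩⟩, hzU⟩
  choose y hy1 hy2 using hy
  obtain ⟨J, pJ, g, p, hJne, hJdir, hcof, hconv⟩ :=
    hwac S inferInstance inferInstance hS id monotone_id (fun s => ⟨s, le_refl s⟩) y hy1
  have hpL : p ∈ ⋂ s : S, closure (⋃ t : S, ⋃ _ : s ≤ t, F t) := by
    rw [Set.mem_iInter]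
    intro s
    rw [mem_closure_iff_nhds]
    intro V hV
    obtain ⟨j₀, hj₀⟩ := hconv V hV
    obtain ⟨j₁, hj₁⟩ := hcof s
    obtain ⟨j, hj0, hj1⟩ := hJdir j₀ j₁
    refine ⟨y (g j), hj₀ j hj0, ?_⟩
    have h1 := hy1 (g j)
    simp only [Set.mem_iUnion, id] at h1 ⊢
    obtain ⟨t, ht, hmem⟩ := h1
    exact ⟨t, le_trans (hj₁ j hj1) ht, hmem⟩
  have hUp : U ∈ nhds p := mem_nhdsSet_iff_forall.mp hU p hpL
  obtain ⟨j₀, hj₀⟩ := hconv U hUp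
  exact hy2 (g j₀) (hj₀ j₀ (le_refl j₀))
end

section
/- Let X be a topological space, S a directed set, and (X_s)_{s∈S} a net of nonempty subsets of X. If there exists s₀ ∈ S such that the closure of ⋃_{t≥s₀} X_t is compact (eventual Lagrange stability), then: (1) the limit set L(X_s)_{s∈S} is a nonempty compact set; and (2) (X_s) converges from above to L(X_s)_{s∈S}. -/
/-- an eventually Lagrange stable net of nonempty subsets has a nonempty
compact limit set, to which it converges from above. -/
theorem stmt_14 {X S : Type*} [TopologicalSpace X] [Preorder S] [Nonempty S]
    (hS : ∀ a b : S, ∃ c, a ≤ c ∧ b ≤ c) (F : S → Set X) (hne : ∀ s, (F s).Nonempty)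
    (s₀ : S) (hc : IsCompact (closure (⋃ t : S, ⋃ _ : s₀ ≤ t, F t))) :
    (⋂ s : S, closure (⋃ t : S, ⋃ _ : s ≤ t, F t)).Nonempty ∧
    IsCompact (⋂ s : S, closure (⋃ t : S, ⋃ _ : s ≤ t, F t)) ∧
    (∀ U ∈ nhdsSet (⋂ s : S, closure (⋃ t : S, ⋃ _ : s ≤ t, F t)),
      ∃ s : S, ∀ t, s ≤ t → F t ⊆ U) := by
  set G : S → Set X := fun s => closure (⋃ t : S, ⋃ _ : s ≤ t, F t) with hG
  have hGanti : ∀ {a b : S}, a ≤ b → G b ⊆ G a := by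
    intro a b hab
    apply closure_mono
    intro x hx
    simp only [Set.mem_iUnion] at hx ⊢
    obtain ⟨t, h, hx⟩ := hx
    exact ⟨t, hab.trans h, hx⟩
  have hGcl : ∀ s, IsClosed (G s) := fun s => isClosed_closure
  have hGcomp : ∀ s, s₀ ≤ s → IsCompact (G s) :=
    fun s h => hc.of_isClosed_subset (hGcl s) (hGanti h)
  have hGne : ∀ s, (G s).Nonempty := by
    intro s
    obtain ⟨x, hx⟩ := hne s
    exact ⟨x, subset_closure (Set.mem_iUnion₂.2 ⟨s, le_rfl, hx⟩)⟩
  choose c hc1 hc2 using fun s => hS s s₀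
  set H : S → Set X := fun s => G (c s) with hH
  have hHdir : Directed (· ⊇ ·) H := by
    intro a b
    obtain ⟨d, hda, hdb⟩ := hS (c a) (c b)
    exact ⟨d, hGanti (hda.trans (hc1 d)), hGanti (hdb.trans (hc1 d))⟩
  have hHcomp : ∀ s, IsCompact (H s) := fun s => hGcomp _ (hc2 s)
  have hHsub : ∀ s, H s ⊆ G s := fun s => hGanti (hc1 s)
  have hHinter : (⋂ s, H s) ⊆ ⋂ s, G s :=
    Set.iInter_mono fun s => hHsub s
  have hLne : (⋂ s, G s).Nonempty := by
    refine (IsCompact.nonempty_iInter_of_directed_nonempty_isCompact_isClosed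
      H hHdir (fun s => hGne _) hHcomp (fun s => hGcl _)).mono hHinter
  refine ⟨hLne, hc.of_isClosed_subset (isClosed_iInter hGcl) (Set.iInter_subset G s₀), ?_⟩
  intro U hU
  obtain ⟨V, hVopen, hLV, hVU⟩ := mem_nhdsSet_iff_exists.1 hU
  by_contra hcon
  push_neg at hcon
  have key : ∀ s, (H s \ V).Nonempty := by
    intro s
    by_contra h
    rw [Set.not_nonempty_iff_eq_empty, Set.diff_eq_empty] at h
    obtain ⟨t, hst, ht⟩ := hcon (c s)
    exact ht fun x hx =>
      hVU (h (subset_closure (Set.mem_iUnion₂.2 ⟨t, hst, hx⟩)))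
  have := IsCompact.nonempty_iInter_of_directed_nonempty_isCompact_isClosed
    (fun s => H s \ V) (fun a b => by
      obtain ⟨d, hda, hdb⟩ := hHdir a b
      exact ⟨d, Set.diff_subset_diff_left hda, Set.diff_subset_diff_left hdb⟩)
    key (fun s => (hHcomp s).diff hVopen)
    (fun s => (hGcl _).sdiff hVopen)
  obtain ⟨x, hx⟩ := this
  simp only [Set.mem_iInter, Set.mem_diff] at hx
  exact (hx (Classical.arbitrary S)).2 (hLV (hHinter (Set.mem_iInter.2 fun s => (hx s).1)))
end

section
/- Let X be a uniform space, S a directed set, and (X_s)_{s∈S} a net of subsets of X. If (X_s) is weakly asymptotically compact, then the limit set L(X_s)_{s∈S} = ⋂_{s∈S} closure(⋃_{t≥s} X_t) is compact. -/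
universe u

/-- in a uniform space, the limit set of a weakly asymptotically compact
net of subsets is compact. -/
theorem stmt_17 {X S : Type u} [UniformSpace X] [Preorder S] [Nonempty S]
    (hS : ∀ a b : S, ∃ c, a ≤ c ∧ b ≤ c) (F : S → Set X)
    (hwac : ∀ (I : Type u) (_ : Preorder I), Nonempty I →
      (∀ a b : I, ∃ c, a ≤ c ∧ b ≤ c) →
      ∀ h : I → S, Monotone h → (∀ s : S, ∃ i : I, s ≤ h i) →
      ∀ yi : I → X, (∀ i, yi i ∈ ⋃ t : S, ⋃ _ : h i ≤ t, F t) →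
      ∃ (J : Type u) (_ : Preorder J) (g : J → I) (p : X),
        Nonempty J ∧ (∀ a b : J, ∃ c, a ≤ c ∧ b ≤ c) ∧
        (∀ i : I, ∃ j₀ : J, ∀ j, j₀ ≤ j → i ≤ g j) ∧
        (∀ U ∈ nhds p, ∃ j₀ : J, ∀ j, j₀ ≤ j → yi (g j) ∈ U)) :
    IsCompact (⋂ s : S, closure (⋃ t : S, ⋃ _ : s ≤ t, F t)) := by
  classical
  set A : S → Set X := fun s => ⋃ t : S, ⋃ _ : s ≤ t, F t with hAdef
  have hAanti : ∀ {s t : S}, s ≤ t → A t ⊆ A s := by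
    intro s t hst z hz
    simp only [hAdef, Set.mem_iUnion] at hz ⊢
    obtain ⟨u, hu, hzu⟩ := hz
    exact ⟨u, le_trans hst hu, hzu⟩
  set L : Set X := ⋂ s : S, closure (A s) with hLdef
  intro f hne hf
  have hLf : L ∈ f := hf (Filter.mem_principal_self L)
  let I : Type u := {B : Set X // B ∈ f} × S × {U : Set (X × X) // U ∈ uniformity X}
  let pre : Preorder I :=
  { le := fun a b => b.1.1 ⊆ a.1.1 ∧ a.2.1 ≤ b.2.1 ∧ b.2.2.1 ⊆ a.2.2.1
    lt := fun a b => (b.1.1 ⊆ a.1.1 ∧ a.2.1 ≤ b.2.1 ∧ b.2.2.1 ⊆ a.2.2.1) ∧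
      ¬(a.1.1 ⊆ b.1.1 ∧ b.2.1 ≤ a.2.1 ∧ a.2.2.1 ⊆ b.2.2.1)
    lt_iff_le_not_ge := fun _ _ => Iff.rfl
    le_refl := fun _ => ⟨subset_rfl, le_refl _, subset_rfl⟩
    le_trans := fun _ _ _ hab hbc =>
      ⟨hbc.1.trans hab.1, hab.2.1.trans hbc.2.1, hbc.2.2.trans hab.2.2⟩ }
  have key : ∀ i : I, ∃ xy : X × X, xy.1 ∈ i.1.1 ∧ xy.1 ∈ L ∧
      xy.2 ∈ A i.2.1 ∧ (xy.1, xy.2) ∈ i.2.2.1 := by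
    intro i
    obtain ⟨x, hxB, hxL⟩ := Filter.nonempty_of_mem (Filter.inter_mem i.1.2 hLf)
    have hxc : x ∈ closure (A i.2.1) := by
      have := Set.mem_iInter.1 hxL i.2.1
      exact this
    have hball : UniformSpace.ball x i.2.2.1 ∈ nhds x :=
      UniformSpace.ball_mem_nhds x i.2.2.2
    obtain ⟨y, hy1, hy2⟩ := (mem_closure_iff_nhds.1 hxc) _ hball
    exact ⟨(x, y), hxB, hxL, hy2, hy1⟩
  choose xy hxB hxL hyA hxy using key
  set x : I → X := fun i => (xy i).1 with hxdef
  set y : I → X := fun i => (xy i).2 with hydef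
  obtain ⟨J, preJ, g, p, hJne, hJdir, hcof, hconv⟩ :=
    hwac I pre
      ⟨(⟨Set.univ, Filter.univ_mem⟩, Classical.arbitrary S, ⟨Set.univ, Filter.univ_mem⟩)⟩
      (fun a b => by
        obtain ⟨c, hac, hbc⟩ := hS a.2.1 b.2.1
        exact ⟨(⟨a.1.1 ∩ b.1.1, Filter.inter_mem a.1.2 b.1.2⟩, c,
          ⟨a.2.2.1 ∩ b.2.2.1, Filter.inter_mem a.2.2.2 b.2.2.2⟩),
          ⟨Set.inter_subset_left, hac, Set.inter_subset_left⟩,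
          ⟨Set.inter_subset_right, hbc, Set.inter_subset_right⟩⟩)
      (fun i => i.2.1) (fun _ _ hab => hab.2.1)
      (fun s => ⟨(⟨Set.univ, Filter.univ_mem⟩, s, ⟨Set.univ, Filter.univ_mem⟩), le_refl s⟩)
      y (fun i => hyA i)
  have hpL : p ∈ L := by
    rw [hLdef]
    refine Set.mem_iInter.2 fun s => ?_
    rw [mem_closure_iff_nhds]
    intro V hV
    obtain ⟨j₀, hj₀⟩ := hconv V hV
    obtain ⟨j₁, hj₁⟩ := hcof (⟨Set.univ, Filter.univ_mem⟩, s, ⟨Set.univ, Filter.univ_mem⟩)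
    obtain ⟨j₂, h20, h21⟩ := hJdir j₀ j₁
    have hle := hj₁ j₂ h21
    exact ⟨y (g j₂), hj₀ j₂ h20, hAanti hle.2.1 (hyA (g j₂))⟩
  refine ⟨p, hpL, ?_⟩
  rw [clusterPt_iff_nonempty]
  intro V hV B hB
  obtain ⟨T, hT, hTV⟩ := UniformSpace.mem_nhds_iff.1 hV
  obtain ⟨Z, hZ, hZsymm, hZZ⟩ := comp_symm_mem_uniformity_sets hT
  obtain ⟨j₀, hj₀⟩ := hconv (UniformSpace.ball p Z) (UniformSpace.ball_mem_nhds p hZ)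
  obtain ⟨j₁, hj₁⟩ := hcof (⟨B, hB⟩, Classical.arbitrary S, ⟨Z, hZ⟩)
  obtain ⟨j₂, h20, h21⟩ := hJdir j₀ j₁
  have hle := hj₁ j₂ h21
  have h1 : (p, y (g j₂)) ∈ Z := hj₀ j₂ h20
  have h2 : (x (g j₂), y (g j₂)) ∈ Z := hle.2.2 (hxy (g j₂))
  have h3 : (y (g j₂), x (g j₂)) ∈ Z := hZsymm.symm _ _ h2
  have hpx : (p, x (g j₂)) ∈ SetRel.comp Z Z := ⟨y (g j₂), h1, h3⟩
  exact ⟨x (g j₂), hTV (hZZ hpx), hle.1 (hxB (g j₂))⟩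
end

section
/- Let X be a uniform space, S a directed set, and (X_s)_{s∈S} a net of nonempty subsets of X. Then the following are equivalent: (a) (X_s) converges from above to some nonempty compact subset of X; (b) for every directed set I, every subnet (X_{s_i})_{i∈I}, and every choice y_i ∈ X_{s_i}, the net (y_i) has a convergent subnet (asymptotic compactness); (c) the limit set L(X_s)_{s∈S} is a nonempty compact set and (X_s) converges from above to it. -/
universe u
open Filter Set Topology
set_option linter.unusedSectionVars false
set_option maxHeartbeats 1000000


def mkPreorder {α : Type u} (le : α → α → Prop) (hrefl : ∀ a, le a a)
    (htrans : ∀ a b c, le a b → le b c → le a c) : Preorder α where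
  le := le
  lt a b := le a b ∧ ¬ le b a
  le_refl := hrefl
  le_trans := htrans
  lt_iff_le_not_ge _ _ := Iff.rfl

section Aux
variable {X S : Type u} [UniformSpace X] [Preorder S] [Nonempty S]

def Bnd (F : S → Set X) (s : S) : Set X := ⋃ t : S, ⋃ _ : s ≤ t, F t

lemma mem_Bnd {F : S → Set X} {s : S} {x : X} : x ∈ Bnd F s ↔ ∃ t, s ≤ t ∧ x ∈ F t := by
  simp [Bnd]

lemma Bnd_anti {F : S → Set X} {s s' : S} (h : s ≤ s') : Bnd F s' ⊆ Bnd F s := by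
  intro x hx
  rcases mem_Bnd.1 hx with ⟨t, ht, hxt⟩
  exact mem_Bnd.2 ⟨t, le_trans h ht, hxt⟩

def GF (F : S → Set X) : Filter X := ⨅ s : S, 𝓟 (Bnd F s)

/-- condition (b) -/
def CondB (F : S → Set X) : Prop :=
  ∀ (I : Type u) (_ : Preorder I), Nonempty I →
    (∀ a b : I, ∃ c, a ≤ c ∧ b ≤ c) →
    ∀ si : I → S, (∀ s : S, ∃ i₀ : I, ∀ i, i₀ ≤ i → s ≤ si i) →
    ∀ yi : I → X, (∀ i, yi i ∈ F (si i)) →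
    ∃ (J : Type u) (_ : Preorder J) (g : J → I) (p : X),
      Nonempty J ∧ (∀ a b : J, ∃ c, a ≤ c ∧ b ≤ c) ∧
      (∀ i : I, ∃ j₀ : J, ∀ j, j₀ ≤ j → i ≤ g j) ∧
      (∀ U ∈ nhds p, ∃ j₀ : J, ∀ j, j₀ ≤ j → yi (g j) ∈ U)

variable (hS : ∀ a b : S, ∃ c, a ≤ c ∧ b ≤ c) {F : S → Set X} (hne : ∀ s, (F s).Nonempty)

include hS in
lemma GF_directed : Directed (fun x1 x2 : Filter X => x1 ≥ x2) (fun s => 𝓟 (Bnd F s)) := by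
  intro a b
  rcases hS a b with ⟨c, hac, hbc⟩
  exact ⟨c, principal_mono.2 (Bnd_anti hac), principal_mono.2 (Bnd_anti hbc)⟩

include hS in
lemma mem_GF {t : Set X} : t ∈ GF F ↔ ∃ s, Bnd F s ⊆ t := by
  rw [GF, mem_iInf_of_directed (GF_directed hS)]
  simp [mem_principal]

include hne in
lemma Bnd_nonempty (s : S) : (Bnd F s).Nonempty := by
  rcases hne s with ⟨x, hx⟩
  exact ⟨x, mem_Bnd.2 ⟨s, le_refl s, hx⟩⟩

include hS hne in
lemma GF_neBot : (GF F).NeBot := by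
  refine ⟨fun h => ?_⟩
  have h2 := (mem_GF hS (t := (∅ : Set X))).1 (by rw [h]; exact mem_bot)
  rcases h2 with ⟨s, hs⟩
  rcases Bnd_nonempty hne s with ⟨x, hx⟩
  exact (hs hx)

lemma GF_le_principal (s : S) : GF F ≤ 𝓟 (Bnd F s) := iInf_le _ s

include hS in
lemma a_to_H (hA : ∃ K : Set X, K.Nonempty ∧ IsCompact K ∧
      ∀ U ∈ nhdsSet K, ∃ s : S, ∀ t, s ≤ t → F t ⊆ U) :
    ∀ u : Ultrafilter X, (u : Filter X) ≤ GF F → ∃ p, (u : Filter X) ≤ 𝓝 p := by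
  rcases hA with ⟨K, _, hK, hconv⟩
  intro u hu
  have hle : ↑u ≤ 𝓝ˢ K := by
    intro U hU
    rcases hconv U hU with ⟨s, hs⟩
    refine hu ((mem_GF hS).2 ⟨s, fun x hx => ?_⟩)
    rcases mem_Bnd.1 hx with ⟨t, ht, hxt⟩
    exact hs t ht hxt
  by_contra hcon
  push_neg at hcon
  have hdis : ∀ x ∈ K, Disjoint (𝓝 x) ↑u := by
    intro x hx
    by_contra hd
    have hcl : ClusterPt x ↑u := clusterPt_iff_not_disjoint.2 hd
    exact hcon x (Ultrafilter.clusterPt_iff.1 hcl)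
  have hd2 := (hK.disjoint_nhdsSet_left).2 hdis
  have hbot : (↑u : Filter X) = ⊥ := disjoint_self.1 (hd2.mono_left hle)
  exact u.neBot.ne hbot

include hS in
lemma H_to_b (hH : ∀ u : Ultrafilter X, (u : Filter X) ≤ GF F → ∃ p, (u : Filter X) ≤ 𝓝 p) : CondB F := by
  intro I instI hneI hdirI si hsi yi hyi
  letI := instI
  have hdirP : Directed (fun x1 x2 : Filter I => x1 ≥ x2) (fun i => 𝓟 (Ici i)) := by
    intro a b; rcases hdirI a b with ⟨c, hac, hbc⟩
    exact ⟨c, principal_mono.2 fun x hx => le_trans hac hx,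
      principal_mono.2 fun x hx => le_trans hbc hx⟩
  haveI := hneI
  have hmem_atTop : ∀ {t : Set I}, t ∈ (atTop : Filter I) ↔ ∃ i, Ici i ⊆ t := by
    intro t
    rw [atTop, mem_iInf_of_directed hdirP]
    simp [mem_principal]
  have hatTop_neBot : (atTop : Filter I).NeBot := by
    refine forall_mem_nonempty_iff_neBot.1 fun t ht => ?_
    rcases hmem_atTop.1 ht with ⟨i, hi⟩
    exact ⟨i, hi (le_refl i)⟩
  set f : Filter X := map yi atTop with hf
  have hfGF : f ≤ GF F := by
    intro t ht
    rcases (mem_GF hS).1 ht with ⟨s, hsub⟩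
    rcases hsi s with ⟨i₀, hi₀⟩
    refine mem_map.2 (mem_of_superset (hmem_atTop.2 ⟨i₀, subset_rfl⟩) fun i hi => ?_)
    exact hsub (mem_Bnd.2 ⟨si i, hi₀ i hi, hyi i⟩)
  haveI : f.NeBot := hatTop_neBot.map yi
  obtain ⟨u, hu⟩ := Ultrafilter.exists_le f
  obtain ⟨p, hp⟩ := hH u (le_trans hu hfGF)
  have hcl : ClusterPt p f := by
    have h1 : (𝓝 p ⊓ f).NeBot := neBot_of_le (le_inf hp hu)
    exact h1
  have hfreq : ∀ N ∈ 𝓝 p, ∀ i₀ : I, ∃ i, i₀ ≤ i ∧ yi i ∈ N := by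
    intro N hN i₀
    have hV : yi '' Ici i₀ ∈ f :=
      mem_map.2 (mem_of_superset (hmem_atTop.2 ⟨i₀, subset_rfl⟩)
        fun i hi => mem_preimage.2 (mem_image_of_mem yi hi))
    rcases clusterPt_iff_nonempty.1 hcl hN hV with ⟨x, hxN, i, hi, rfl⟩
    exact ⟨i, hi, hxN⟩
  refine ⟨{q : I × Set X // q.2 ∈ 𝓝 p ∧ yi q.1 ∈ q.2},
    mkPreorder (fun a b => a.1.1 ≤ b.1.1 ∧ b.1.2 ⊆ a.1.2)
      (fun a => ⟨le_refl _, subset_rfl⟩)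
      (fun a b c hab hbc => ⟨le_trans hab.1 hbc.1, subset_trans hbc.2 hab.2⟩),
    fun j => j.1.1, p, ?_, ?_, ?_, ?_⟩
  · obtain ⟨i⟩ := hneI
    exact ⟨⟨(i, univ), univ_mem, mem_univ _⟩⟩
  · rintro ⟨⟨ia, Na⟩, hNa, hya⟩ ⟨⟨ib, Nb⟩, hNb, hyb⟩
    rcases hdirI ia ib with ⟨i₁, ha1, hb1⟩
    rcases hfreq (Na ∩ Nb) (inter_mem hNa hNb) i₁ with ⟨i₂, h12, hy2⟩
    exact ⟨⟨(i₂, Na ∩ Nb), inter_mem hNa hNb, hy2⟩,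
      ⟨le_trans ha1 h12, inter_subset_left⟩, ⟨le_trans hb1 h12, inter_subset_right⟩⟩
  · intro i
    exact ⟨⟨(i, univ), univ_mem, mem_univ _⟩, fun j hj => hj.1⟩
  · intro U hU
    obtain ⟨i⟩ := hneI
    rcases hfreq U hU i with ⟨i', _, hy'⟩
    exact ⟨⟨(i', U), hU, hy'⟩, fun j hj => hj.2 j.2.2⟩

include hS in
lemma b_to_H (hB : CondB F) :
    ∀ u : Ultrafilter X, (u : Filter X) ≤ GF F → ∃ p, (u : Filter X) ≤ 𝓝 p := by
  intro u hu
  obtain ⟨s₀⟩ := (inferInstance : Nonempty S)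
  letI instI : Preorder (S × {A : Set X // A ∈ u}) :=
    mkPreorder (fun a b => a.1 ≤ b.1 ∧ b.2.1 ⊆ a.2.1)
      (fun a => ⟨le_refl _, subset_rfl⟩)
      (fun a b c hab hbc => ⟨le_trans hab.1 hbc.1, subset_trans hbc.2 hab.2⟩)
  have hsel : ∀ i : S × {A : Set X // A ∈ u}, ∃ (t : S) (x : X),
      i.1 ≤ t ∧ x ∈ F t ∧ x ∈ i.2.1 := by
    intro i
    have hB' : Bnd F i.1 ∈ u := hu (GF_le_principal i.1 (mem_principal_self _))
    rcases Ultrafilter.nonempty_of_mem (inter_mem i.2.2 hB') with ⟨x, hxA, hxB⟩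
    rcases mem_Bnd.1 hxB with ⟨t, ht, hxt⟩
    exact ⟨t, x, ht, hxt, hxA⟩
  choose si yi h1 h2 h3 using hsel
  have hmain := hB (S × {A : Set X // A ∈ u}) instI ⟨(s₀, ⟨univ, univ_mem⟩)⟩
    (fun a b => by
      rcases hS a.1 b.1 with ⟨c, hac, hbc⟩
      exact ⟨(c, ⟨a.2.1 ∩ b.2.1, inter_mem a.2.2 b.2.2⟩),
        ⟨hac, inter_subset_left⟩, ⟨hbc, inter_subset_right⟩⟩)
    si
    (fun s => ⟨(s, ⟨univ, univ_mem⟩), fun i hi => le_trans hi.1 (h1 i)⟩)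
    yi h2
  obtain ⟨J, instJ, g, p, hJne, hJdir, hcof, hconv⟩ := hmain
  refine ⟨p, Ultrafilter.clusterPt_iff.1 (clusterPt_iff_nonempty.2 ?_)⟩
  intro N hN A hA
  rcases hconv N hN with ⟨j₁, hj₁⟩
  rcases hcof (s₀, ⟨A, hA⟩) with ⟨j₂, hj₂⟩
  rcases hJdir j₁ j₂ with ⟨j, h1j, h2j⟩
  refine ⟨yi (g j), hj₁ j h1j, ?_⟩
  exact (hj₂ j h2j).2 (h3 (g j))

lemma limit_mem {F : S → Set X} (u : Ultrafilter X) (hu : (u : Filter X) ≤ GF F) {p : X}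
    (hp : (u : Filter X) ≤ 𝓝 p) : p ∈ ⋂ s : S, closure (Bnd F s) := by
  refine mem_iInter.2 fun s => mem_closure_iff_nhds.2 fun N hN => ?_
  exact Ultrafilter.nonempty_of_mem
    (inter_mem (hp hN) (hu (GF_le_principal s (mem_principal_self _))))

include hS hne in
lemma H_to_c (hH : ∀ u : Ultrafilter X, (u : Filter X) ≤ GF F → ∃ p, (u : Filter X) ≤ 𝓝 p) :
    (⋂ s : S, closure (Bnd F s)).Nonempty ∧ IsCompact (⋂ s : S, closure (Bnd F s)) ∧
      ∀ U ∈ nhdsSet (⋂ s : S, closure (Bnd F s)), ∃ s : S, ∀ t, s ≤ t → F t ⊆ U := by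
  haveI : (GF F).NeBot := GF_neBot hS hne
  haveI : Nonempty X := ⟨(hne (Classical.arbitrary S)).choose⟩
  set L := ⋂ s : S, closure (Bnd F s) with hLdef
  have hLclosed : IsClosed L := isClosed_iInter fun _ => isClosed_closure
  have hmem : ∀ u : Ultrafilter X, (u : Filter X) ≤ GF F → ∃ p ∈ L, (u : Filter X) ≤ 𝓝 p := by
    intro u hu
    obtain ⟨p, hp⟩ := hH u hu
    exact ⟨p, limit_mem u hu hp, hp⟩
  obtain ⟨u₀, hu₀⟩ := Ultrafilter.exists_le (GF F)
  obtain ⟨p₀, hp₀L, _⟩ := hmem u₀ hu₀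
  refine ⟨⟨p₀, hp₀L⟩, ?_, ?_⟩
  · -- compactness of L
    refine isCompact_iff_ultrafilter_le_nhds.2 fun f hf => ?_
    set E : {A : Set X // A ∈ f} × {V : Set (X × X) // V ∈ uniformity X} → Set X :=
      fun q => {y | ∃ x ∈ q.1.1, (x, y) ∈ q.2.1} with hE
    have hEdir : Directed (fun x1 x2 : Filter X => x1 ≥ x2) (fun q => 𝓟 (E q)) := by
      rintro ⟨A, V⟩ ⟨A', V'⟩
      refine ⟨(⟨A.1 ∩ A'.1, inter_mem A.2 A'.2⟩, ⟨V.1 ∩ V'.1, inter_mem V.2 V'.2⟩), ?_, ?_⟩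
      · exact principal_mono.2 fun y ⟨x, hx, hxy⟩ => ⟨x, hx.1, hxy.1⟩
      · exact principal_mono.2 fun y ⟨x, hx, hxy⟩ => ⟨x, hx.2, hxy.2⟩
    haveI : Nonempty ({A : Set X // A ∈ f} × {V : Set (X × X) // V ∈ uniformity X}) :=
      ⟨(⟨univ, univ_mem⟩, ⟨univ, univ_mem⟩)⟩
    set k : Filter X := ⨅ q, 𝓟 (E q) with hk
    have hmemk : ∀ {t : Set X}, t ∈ k ↔ ∃ q, E q ⊆ t := by
      intro t; rw [hk, mem_iInf_of_directed hEdir]; simp [mem_principal]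
    have hENB : ∀ q (s : S), (E q ∩ Bnd F s).Nonempty := by
      rintro ⟨A, V⟩ s
      have hAL : (A.1 ∩ L).Nonempty :=
        Ultrafilter.nonempty_of_mem (inter_mem A.2 (hf (mem_principal_self L)))
      obtain ⟨x, hxA, hxL⟩ := hAL
      have hxc : x ∈ closure (Bnd F s) := mem_iInter.1 hxL s
      obtain ⟨y, hyb, hyB⟩ :=
        mem_closure_iff_nhds.1 hxc _ (UniformSpace.ball_mem_nhds x V.2)
      exact ⟨y, ⟨x, hxA, hyb⟩, hyB⟩
    haveI hNB : (k ⊓ GF F).NeBot := by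
      refine forall_mem_nonempty_iff_neBot.1 fun t ht => ?_
      rcases mem_inf_iff.1 ht with ⟨t1, ht1, t2, ht2, rfl⟩
      rcases hmemk.1 ht1 with ⟨q, hq⟩
      rcases (mem_GF hS).1 ht2 with ⟨s, hs⟩
      rcases hENB q s with ⟨y, hy1, hy2⟩
      exact ⟨y, hq hy1, hs hy2⟩
    obtain ⟨u, hu⟩ := Ultrafilter.exists_le (k ⊓ GF F)
    obtain ⟨p, hpL, hpu⟩ := hmem u (le_trans hu inf_le_right)
    have huk : ↑u ≤ k := le_trans hu inf_le_left
    have hfp : ClusterPt p ↑f := by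
      refine clusterPt_iff_nonempty.2 ?_
      intro N' hN' A hA
      rcases UniformSpace.mem_nhds_iff.1 hN' with ⟨V₀, hV₀, hball⟩
      rcases comp_symm_mem_uniformity_sets hV₀ with ⟨W, hW, hWsymm, hWV⟩
      have hm1 : UniformSpace.ball p W ∈ u := hpu (UniformSpace.ball_mem_nhds p hW)
      have hm2 : E (⟨A, hA⟩, ⟨W, hW⟩) ∈ u := huk (hmemk.2 ⟨_, subset_rfl⟩)
      obtain ⟨y, hyb, x, hxA, hxy⟩ := Ultrafilter.nonempty_of_mem (inter_mem hm1 hm2)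
      exact ⟨x, hball (hWV (SetRel.prodMk_mem_comp hyb (hWsymm.symm _ _ hxy))), hxA⟩
    have hfle : ↑f ≤ 𝓝 p := Ultrafilter.clusterPt_iff.1 hfp
    have hpL2 : p ∈ L := by
      have hcl2 : p ∈ closure L := mem_closure_iff_nhds.2 fun N hN =>
        Ultrafilter.nonempty_of_mem (inter_mem (hfle hN) (hf (mem_principal_self L)))
      rwa [hLclosed.closure_eq] at hcl2
    exact ⟨p, hpL2, hfle⟩
  · -- convergence from above to L
    intro U hU
    by_contra hcon
    push_neg at hcon
    have hdir' : Directed (fun x1 x2 : Filter X => x1 ≥ x2) (fun s => 𝓟 (Bnd F s \ U)) := by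
      intro a b; rcases hS a b with ⟨c, hac, hbc⟩
      exact ⟨c, principal_mono.2 (diff_subset_diff_left (Bnd_anti hac)),
        principal_mono.2 (diff_subset_diff_left (Bnd_anti hbc))⟩
    have hneG' : ∀ s : S, (Bnd F s \ U).Nonempty := by
      intro s
      rcases hcon s with ⟨t, hst, hnsub⟩
      rcases not_subset.1 hnsub with ⟨x, hxF, hxU⟩
      exact ⟨x, mem_Bnd.2 ⟨t, hst, hxF⟩, hxU⟩
    haveI : (⨅ s : S, 𝓟 (Bnd F s \ U)).NeBot :=
      iInf_neBot_of_directed hdir' fun s => principal_neBot_iff.2 (hneG' s)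
    obtain ⟨u, hu⟩ := Ultrafilter.exists_le (⨅ s : S, 𝓟 (Bnd F s \ U))
    have huGF : (u : Filter X) ≤ GF F :=
      le_trans hu (iInf_mono fun s => principal_mono.2 diff_subset)
    obtain ⟨p, hpL, hpu⟩ := hmem u huGF
    have hUp : U ∈ u := hpu (mem_nhdsSet_iff_forall.1 hU p hpL)
    have hDp : Bnd F (Classical.arbitrary S) \ U ∈ u :=
      hu (iInf_le (fun s : S => 𝓟 (Bnd F s \ U)) _ (mem_principal_self _))
    rcases Ultrafilter.nonempty_of_mem (inter_mem hUp hDp) with ⟨x, hx1, hx2⟩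
    exact hx2.2 hx1

end Aux

/-- in a uniform space, for a net of nonempty subsets the following are
equivalent: (a) convergence from above to some nonempty compact set; (b) asymptotic
compactness; (c) limit set compactness. Stated as (a ↔ b) ∧ (b ↔ c). -/
theorem stmt_18 {X S : Type u} [UniformSpace X] [Preorder S] [Nonempty S]
    (hS : ∀ a b : S, ∃ c, a ≤ c ∧ b ≤ c) (F : S → Set X) (hne : ∀ s, (F s).Nonempty) :
    ((∃ K : Set X, K.Nonempty ∧ IsCompact K ∧
        ∀ U ∈ nhdsSet K, ∃ s : S, ∀ t, s ≤ t → F t ⊆ U) ↔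
      (∀ (I : Type u) (_ : Preorder I), Nonempty I →
        (∀ a b : I, ∃ c, a ≤ c ∧ b ≤ c) →
        ∀ si : I → S, (∀ s : S, ∃ i₀ : I, ∀ i, i₀ ≤ i → s ≤ si i) →
        ∀ yi : I → X, (∀ i, yi i ∈ F (si i)) →
        ∃ (J : Type u) (_ : Preorder J) (g : J → I) (p : X),
          Nonempty J ∧ (∀ a b : J, ∃ c, a ≤ c ∧ b ≤ c) ∧
          (∀ i : I, ∃ j₀ : J, ∀ j, j₀ ≤ j → i ≤ g j) ∧
          (∀ U ∈ nhds p, ∃ j₀ : J, ∀ j, j₀ ≤ j → yi (g j) ∈ U))) ∧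
    ((∀ (I : Type u) (_ : Preorder I), Nonempty I →
        (∀ a b : I, ∃ c, a ≤ c ∧ b ≤ c) →
        ∀ si : I → S, (∀ s : S, ∃ i₀ : I, ∀ i, i₀ ≤ i → s ≤ si i) →
        ∀ yi : I → X, (∀ i, yi i ∈ F (si i)) →
        ∃ (J : Type u) (_ : Preorder J) (g : J → I) (p : X),
          Nonempty J ∧ (∀ a b : J, ∃ c, a ≤ c ∧ b ≤ c) ∧
          (∀ i : I, ∃ j₀ : J, ∀ j, j₀ ≤ j → i ≤ g j) ∧
          (∀ U ∈ nhds p, ∃ j₀ : J, ∀ j, j₀ ≤ j → yi (g j) ∈ U)) ↔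
      ((⋂ s : S, closure (⋃ t : S, ⋃ _ : s ≤ t, F t)).Nonempty ∧
        IsCompact (⋂ s : S, closure (⋃ t : S, ⋃ _ : s ≤ t, F t)) ∧
        ∀ U ∈ nhdsSet (⋂ s : S, closure (⋃ t : S, ⋃ _ : s ≤ t, F t)),
          ∃ s : S, ∀ t, s ≤ t → F t ⊆ U)) := by
  constructor
  · constructor
    · intro hA
      exact H_to_b hS (a_to_H hS hA)
    · intro hB
      obtain ⟨h1, h2, h3⟩ := H_to_c hS hne (b_to_H hS hB)
      exact ⟨_, h1, h2, h3⟩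
  · constructor
    · intro hB
      exact H_to_c hS hne (b_to_H hS hB)
    · intro hC
      exact H_to_b hS (a_to_H hS ⟨_, hC.1, hC.2.1, hC.2.2⟩)
end

section
/- Let X be a pseudo-metrizable topological space, S a directed set admitting a cofinal sequence (sequential directed set), and (X_s)_{s∈S} a net of nonempty subsets of X. Then (X_s) is asymptotically compact (every net (y_i), y_i ∈ X_{s_i} along a subnet, has a convergent subnet) if and only if (X_s) is asymptotically sequentially compact (for every sequence (s_n) in S with s_n → ∞ and every choice y_n ∈ X_{s_n}, the sequence (y_n) has a convergent subsequence). -/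
universe u

/-- Recursive construction: starting from `a0` satisfying `P`, if every `a` with `P a`
can be followed by some `b` with `P b` and `Q n a b`, we get a full chain. -/
private lemma nat_chain {α : Type*} (P : α → Prop) (Q : ℕ → α → α → Prop) (a0 : α)
    (h0 : P a0) (hstep : ∀ n a, P a → ∃ b, P b ∧ Q n a b) :
    ∃ f : ℕ → α, f 0 = a0 ∧ (∀ n, P (f n)) ∧ ∀ n, Q n (f n) (f (n + 1)) := by
  have hstep' : ∀ n a, ∃ b, P a → P b ∧ Q n a b := by
    intro n a
    by_cases h : P a
    · obtain ⟨b, hb⟩ := hstep n a h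
      exact ⟨b, fun _ => hb⟩
    · exact ⟨a, fun h' => absurd h' h⟩
  choose g hg using hstep'
  refine ⟨fun n => Nat.rec a0 (fun n a => g n a) n, rfl, ?_, ?_⟩
  · intro n
    induction n with
    | zero => exact h0
    | succ k ih => exact (hg k _ ih).1
  · intro n
    have hP : ∀ m, P (Nat.rec a0 (fun n a => g n a) m) := by
      intro m
      induction m with
      | zero => exact h0
      | succ k ih => exact (hg k _ ih).1
    exact (hg n _ (hP n)).2

/-- pigeonhole for "frequently" along a directed preorder: if a net is frequently in a
finite union, it is frequently in one of the members. -/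
private lemma freq_finset {I X : Type*} [Preorder I] [Nonempty I]
    (hdir : ∀ a b : I, ∃ c : I, a ≤ c ∧ b ≤ c)
    (y : I → X) (A : Finset X) (U : X → Set X)
    (h : ∀ i₀ : I, ∃ i, i₀ ≤ i ∧ y i ∈ ⋃ a ∈ A, U a) :
    ∃ a ∈ A, ∀ i₀ : I, ∃ i, i₀ ≤ i ∧ y i ∈ U a := by
  classical
  by_contra hc
  push_neg at hc
  choose f hf using hc
  haveI : IsDirected I (· ≤ ·) := ⟨hdir⟩
  obtain ⟨M, hM⟩ := (A.attach.image fun (a : {x // x ∈ A}) => f a.1 a.2).exists_le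
  obtain ⟨i, hiM, hiU⟩ := h M
  rw [Set.mem_iUnion₂] at hiU
  obtain ⟨a, ha, hai⟩ := hiU
  have : f a ha ≤ M := hM _ (Finset.mem_image_of_mem _ (A.mem_attach ⟨a, ha⟩))
  exact hf a ha i (le_trans this hiM) hai

/-- for a sequential directed set `S` and a pseudo-metrizable space `X`,
a net of nonempty subsets is asymptotically compact iff it is asymptotically
sequentially compact. -/
theorem stmt_19 {X S : Type u} [PseudoMetricSpace X] [Preorder S] [Nonempty S]
    (hS : ∀ a b : S, ∃ c, a ≤ c ∧ b ≤ c)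
    (hseq : ∃ sn : ℕ → S, ∀ s : S, ∃ n₀ : ℕ, ∀ n, n₀ ≤ n → s ≤ sn n)
    (F : S → Set X) (hne : ∀ s, (F s).Nonempty) :
    (∀ (I : Type u) (_ : Preorder I), Nonempty I →
      (∀ a b : I, ∃ c, a ≤ c ∧ b ≤ c) →
      ∀ si : I → S, (∀ s : S, ∃ i₀ : I, ∀ i, i₀ ≤ i → s ≤ si i) →
      ∀ yi : I → X, (∀ i, yi i ∈ F (si i)) →
      ∃ (J : Type u) (_ : Preorder J) (g : J → I) (p : X),
        Nonempty J ∧ (∀ a b : J, ∃ c, a ≤ c ∧ b ≤ c) ∧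
        (∀ i : I, ∃ j₀ : J, ∀ j, j₀ ≤ j → i ≤ g j) ∧
        (∀ U ∈ nhds p, ∃ j₀ : J, ∀ j, j₀ ≤ j → yi (g j) ∈ U)) ↔
    (∀ sn : ℕ → S, (∀ s : S, ∃ n₀ : ℕ, ∀ n, n₀ ≤ n → s ≤ sn n) →
      ∀ yn : ℕ → X, (∀ n, yn n ∈ F (sn n)) →
      ∃ φ : ℕ → ℕ, StrictMono φ ∧ ∃ p : X,
        Filter.Tendsto (fun k => yn (φ k)) Filter.atTop (nhds p)) := by
  obtain ⟨sn, hsn⟩ := hseq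
  letI instU : Preorder (ULift.{u} ℕ) := Preorder.lift ULift.down
  constructor
  · -- net version → sequential version
    intro hnet sn' hsn' yn hyn
    obtain ⟨J, instJ, g, p, hJne, hJdir, hcof, hconv⟩ :=
      hnet (ULift.{u} ℕ) instU ⟨⟨0⟩⟩
        (fun a b => ⟨⟨max a.down b.down⟩, le_max_left _ _, le_max_right _ _⟩)
        (fun i => sn' i.down)
        (fun s => by
          obtain ⟨n₀, h⟩ := hsn' s
          exact ⟨⟨n₀⟩, fun i hi => h i.down hi⟩)
        (fun i => yn i.down) (fun i => hyn i.down)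
    have hfreq : ∀ U ∈ nhds p, ∀ N : ℕ, ∃ n, N ≤ n ∧ yn n ∈ U := by
      intro U hU N
      obtain ⟨j₁, hj₁⟩ := hconv U hU
      obtain ⟨j₂, hj₂⟩ := hcof ⟨N⟩
      obtain ⟨j, hj1, hj2⟩ := hJdir j₁ j₂
      exact ⟨(g j).down, hj₂ j hj2, hj₁ j hj1⟩
    have hcp : MapClusterPt p Filter.atTop yn := by
      rw [mapClusterPt_iff_frequently]
      intro s hs
      rw [Filter.frequently_atTop]
      intro N
      obtain ⟨n, hn1, hn2⟩ := hfreq s hs N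
      exact ⟨n, hn1, hn2⟩
    obtain ⟨ψ, hψ, hψt⟩ := TopologicalSpace.FirstCountableTopology.tendsto_subseq hcp
    exact ⟨ψ, hψ, p, hψt⟩
  · -- sequential version → net version
    intro hright I instI hIne hIdir si hsi yi hyi
    -- "frequently in" predicate
    -- Step 1: eventual total boundedness
    have etb : ∀ ε : ℝ, 0 < ε →
        ∃ (A : Finset X) (i₀ : I), ∀ i, i₀ ≤ i → ∃ a ∈ A, dist (yi i) a < ε := by
      intro ε hε
      classical
      by_contra hc
      push_neg at hc
      -- hc : ∀ A i₀, ∃ i, i₀ ≤ i ∧ ∀ a ∈ A, ε ≤ dist (yi i) a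
      obtain ⟨i₀0, hi₀0⟩ := hsi (sn 0)
      obtain ⟨iz, hiz, _⟩ := hc ∅ i₀0
      obtain ⟨f, hf0, hfP, hfQ⟩ :=
        nat_chain (α := I × Finset X) (fun b => yi b.1 ∈ b.2)
          (fun n b b' => b'.2 = insert (yi b'.1) b.2 ∧ sn (n + 1) ≤ si b'.1 ∧
            ∀ x ∈ b.2, ε ≤ dist (yi b'.1) x)
          (iz, {yi iz})
          (Finset.mem_singleton_self _)
          (by
            intro n b _
            obtain ⟨i₀', hi₀'⟩ := hsi (sn (n + 1))
            obtain ⟨i, hi, hsep⟩ := hc b.2 i₀'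
            exact ⟨(i, insert (yi i) b.2), Finset.mem_insert_self _ _,
              rfl, hi₀' i hi, hsep⟩)
      have hsn0 : sn 0 ≤ si (f 0).1 := by
        rw [hf0]
        exact hi₀0 _ hiz
      have hsnn : ∀ n, sn n ≤ si (f n).1 := by
        intro n
        cases n with
        | zero => exact hsn0
        | succ k => exact (hfQ k).2.1
      have hmono : ∀ m n, m ≤ n → (f m).2 ⊆ (f n).2 := by
        intro m n hmn
        induction n with
        | zero => simp_all
        | succ k ih =>
          rcases Nat.lt_or_ge m (k + 1) with h | h
          · refine subset_trans (ih (Nat.lt_succ_iff.mp h)) ?_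
            rw [(hfQ k).1]
            exact Finset.subset_insert _ _
          · have : m = k + 1 := le_antisymm hmn h
            subst this
            exact subset_rfl
      have hkey : ∀ m n, m < n → ε ≤ dist (yi (f n).1) (yi (f m).1) := by
        intro m n hmn
        cases n with
        | zero => omega
        | succ k =>
          exact (hfQ k).2.2 _ (hmono m k (Nat.lt_succ_iff.mp hmn) (hfP m))
      obtain ⟨φ, hφ, p, hp⟩ := hright (fun n => si (f n).1)
        (by
          intro s
          obtain ⟨n₀, h⟩ := hsn s
          exact ⟨n₀, fun n hn => le_trans (h n hn) (hsnn n)⟩)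
        (fun n => yi (f n).1) (fun n => hyi (f n).1)
      rw [Metric.tendsto_atTop] at hp
      obtain ⟨k₀, hk₀⟩ := hp (ε / 2) (by linarith)
      have h1 := hk₀ k₀ le_rfl
      have h2 := hk₀ (k₀ + 1) (Nat.le_succ _)
      have h3 : ε ≤ dist (yi (f (φ (k₀ + 1))).1) (yi (f (φ k₀)).1) :=
        hkey _ _ (hφ (Nat.lt_succ_self _))
      have h4 : dist (yi (f (φ (k₀ + 1))).1) (yi (f (φ k₀)).1) ≤
          dist (yi (f (φ (k₀ + 1))).1) p + dist (yi (f (φ k₀)).1) p :=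
        dist_triangle_right _ _ _
      linarith
    -- Step 2: nested chain of frequently-visited small sets
    obtain ⟨C, hC0, hCP, hCQ⟩ :=
      nat_chain (α := Set X) (fun C => ∀ i₀ : I, ∃ i, i₀ ≤ i ∧ yi i ∈ C)
        (fun n C C' => C' ⊆ C ∧
          ∀ x ∈ C', ∀ y ∈ C', dist x y < 2 * (1 / 2 : ℝ) ^ (n + 1))
        Set.univ (fun i₀ => ⟨i₀, le_rfl, Set.mem_univ _⟩)
        (by
          intro n C hC
          set ε : ℝ := (1 / 2 : ℝ) ^ (n + 1) with hεdef
          have hε : 0 < ε := by positivity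
          obtain ⟨A, i₀, hA⟩ := etb ε hε
          have hU : ∀ i₀' : I, ∃ i, i₀' ≤ i ∧
              yi i ∈ ⋃ a ∈ A, (C ∩ Metric.ball a ε) := by
            intro i₀'
            obtain ⟨m, hm1, hm2⟩ := hIdir i₀' i₀
            obtain ⟨i, hi, hiC⟩ := hC m
            obtain ⟨a, ha, hd⟩ := hA i (le_trans hm2 hi)
            refine ⟨i, le_trans hm1 hi, ?_⟩
            rw [Set.mem_iUnion₂]
            exact ⟨a, ha, hiC, Metric.mem_ball.mpr hd⟩
          obtain ⟨a, _, hafreq⟩ := freq_finset hIdir yi A (fun a => C ∩ Metric.ball a ε) hU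
          refine ⟨C ∩ Metric.ball a ε, hafreq, Set.inter_subset_left, ?_⟩
          intro x hx y hy
          have hx' := Metric.mem_ball.mp hx.2
          have hy' := Metric.mem_ball.mp hy.2
          calc dist x y ≤ dist x a + dist y a := dist_triangle_right _ _ _
            _ < ε + ε := by linarith
            _ = 2 * ε := by ring)
    -- Step 3: pick a sequence through the chain and extract a limit point
    have hz : ∀ n : ℕ, ∃ i : I, sn n ≤ si i ∧ yi i ∈ C n := by
      intro n
      obtain ⟨i₀, hi₀⟩ := hsi (sn n)
      obtain ⟨i, hi, hiC⟩ := hCP n i₀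
      exact ⟨i, hi₀ i hi, hiC⟩
    choose j hj1 hj2 using hz
    obtain ⟨ψ, hψ, p, hp⟩ := hright (fun n => si (j n))
      (by
        intro s
        obtain ⟨n₀, h⟩ := hsn s
        exact ⟨n₀, fun n hn => le_trans (h n hn) (hj1 n)⟩)
      (fun n => yi (j n)) (fun n => hyi (j n))
    have hCmono : Antitone C := antitone_nat_of_succ_le (fun n => (hCQ n).1)
    have hdistzp : Filter.Tendsto (fun k => dist (yi (j (ψ k))) p)
        Filter.atTop (nhds 0) := by
      rw [tendsto_iff_dist_tendsto_zero] at hp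
      exact hp
    -- Step 4: p is a cluster point of the net
    have hxp : ∀ (n : ℕ), ∀ x ∈ C (n + 1), dist x p ≤ 2 * (1 / 2 : ℝ) ^ (n + 1) := by
      intro n x hx
      have hT : Filter.Tendsto (fun k => 2 * (1 / 2 : ℝ) ^ (n + 1)
          + dist (yi (j (ψ k))) p) Filter.atTop (nhds (2 * (1 / 2 : ℝ) ^ (n + 1))) := by
        have := Filter.Tendsto.add (tendsto_const_nhds
          (x := 2 * (1 / 2 : ℝ) ^ (n + 1)) (f := Filter.atTop (α := ℕ))) hdistzp
        rwa [add_zero] at this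
      refine ge_of_tendsto hT ?_
      rw [Filter.eventually_atTop]
      refine ⟨n + 1, fun k hk => ?_⟩
      have hzk : yi (j (ψ k)) ∈ C (n + 1) :=
        hCmono (le_trans hk (hψ.le_apply)) (hj2 (ψ k))
      have hd : dist x (yi (j (ψ k))) < 2 * (1 / 2 : ℝ) ^ (n + 1) :=
        (hCQ n).2 x hx _ hzk
      calc dist x p ≤ dist x (yi (j (ψ k))) + dist (yi (j (ψ k))) p :=
            dist_triangle _ _ _
        _ ≤ 2 * (1 / 2 : ℝ) ^ (n + 1) + dist (yi (j (ψ k))) p := by linarith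
    have hclus : ∀ ε : ℝ, 0 < ε → ∀ i₀ : I, ∃ i, i₀ ≤ i ∧ dist (yi i) p < ε := by
      intro ε hε i₀
      obtain ⟨n, hn⟩ := exists_pow_lt_of_lt_one (half_pos hε) (by norm_num : (1 / 2 : ℝ) < 1)
      obtain ⟨i, hi, hiC⟩ := hCP (n + 1) i₀
      refine ⟨i, hi, lt_of_le_of_lt (hxp n _ hiC) ?_⟩
      have : 2 * (1 / 2 : ℝ) ^ (n + 1) = (1 / 2 : ℝ) ^ n := by
        rw [pow_succ]; ring
      rw [this]
      linarith
    -- Step 5: build the subnet converging to p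
    have hmk : ∀ (i₀ : I) (n : ℕ), ∃ i, i₀ ≤ i ∧ dist (yi i) p < (1 / 2 : ℝ) ^ n :=
      fun i₀ n => hclus _ (by positivity) i₀
    refine ⟨{q : I × ULift.{u} ℕ // dist (yi q.1) p < (1 / 2 : ℝ) ^ q.2.down},
      inferInstance, fun q => q.1.1, p, ?_, ?_, ?_, ?_⟩
    · obtain ⟨i₀⟩ := hIne
      obtain ⟨i, _, hi2⟩ := hmk i₀ 0
      exact ⟨⟨(i, ⟨0⟩), hi2⟩⟩
    · rintro ⟨⟨i₁, n₁⟩, h₁⟩ ⟨⟨i₂, n₂⟩, h₂⟩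
      obtain ⟨i', hi'1, hi'2⟩ := hIdir i₁ i₂
      obtain ⟨i, hii, hid⟩ := hmk i' (max n₁.down n₂.down)
      refine ⟨⟨(i, ⟨max n₁.down n₂.down⟩), hid⟩,
        ⟨le_trans hi'1 hii, ?_⟩, ⟨le_trans hi'2 hii, ?_⟩⟩
      · exact le_max_left _ _
      · exact le_max_right _ _
    · intro i
      obtain ⟨i', hi'1, hi'2⟩ := hmk i 0
      refine ⟨⟨(i', ⟨0⟩), hi'2⟩, ?_⟩
      rintro ⟨⟨i₂, n₂⟩, h₂⟩ hle
      exact le_trans hi'1 hle.1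
    · intro U hU
      rw [Metric.mem_nhds_iff] at hU
      obtain ⟨ε, hε, hsub⟩ := hU
      obtain ⟨n, hn⟩ := exists_pow_lt_of_lt_one hε (by norm_num : (1 / 2 : ℝ) < 1)
      obtain ⟨i₀⟩ := hIne
      obtain ⟨i, _, hid⟩ := hmk i₀ n
      refine ⟨⟨(i, ⟨n⟩), hid⟩, ?_⟩
      rintro ⟨⟨i₂, n₂⟩, h₂⟩ hle
      apply hsub
      rw [Metric.mem_ball]
      have hle2 : n ≤ n₂.down := hle.2
      have : (1 / 2 : ℝ) ^ n₂.down ≤ (1 / 2 : ℝ) ^ n :=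
        pow_le_pow_of_le_one (by norm_num) (by norm_num) hle2
      exact lt_trans (lt_of_lt_of_le h₂ this) hn
end
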